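/- arXiv:1806.05523 — 6 statements merged into one kernel-verified Lean document; each statement's English description precedes it below -/
import Mathlib

section
/- In a k-truss G, for every vertex v, the number of triangles of G containing v is at least binomial(k+1, 2). -/
/-!
The triangles through `v` correspond injectively to the edges of the neighbourhood graph
`L = G[N(v)]`. In `L` the degree of `w` is the number of common neighbours of `v` and `w`, so
the truss condition gives `L` minimum degree at least `k`; as `N(v)` is nonempty, `L` then has
at least `k + 1` vertices and, by the handshake lemma, at least `(k + 1) k / 2` edges.
-/

/-- A graph is a `k`-truss if it has no isolated vertices and every edge is
contained in at least `k` triangles. -/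
def SimpleGraph.IsTruss {V : Type*} (G : SimpleGraph V) (k : ℕ) : Prop :=
  (∀ v : V, ∃ u : V, G.Adj v u) ∧
  ∀ ⦃u v : V⦄, G.Adj u v → k ≤ {w : V | G.Adj u w ∧ G.Adj v w}.ncard

open Finset

lemma Sym2.toFinset_injective {α : Type*} [DecidableEq α] :
    Function.Injective (Sym2.toFinset : Sym2 α → Finset α) :=
  fun z w h => Sym2.ext fun x => by rw [← mem_toFinset, h, mem_toFinset]

namespace SimpleGraph

variable {V : Type*} (G : SimpleGraph V)

theorem choose_two_le_card_edgeFinset [Fintype V] [DecidableRel G.Adj] :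
    (G.minDegree + 1).choose 2 ≤ #G.edgeFinset := by
  cases isEmpty_or_nonempty V
  · simp [minDegree]
  have hsum : Fintype.card V * G.minDegree ≤ 2 * #G.edgeFinset := by
    rw [← sum_degrees_eq_twice_card_edges, ← smul_eq_mul, ← card_univ, ← sum_const]
    exact sum_le_sum fun v _ => G.minDegree_le_degree v
  refine Nat.le_of_mul_le_mul_right ?_ two_pos
  calc (G.minDegree + 1).choose 2 * 2 = (G.minDegree + 1) * G.minDegree := by
        simpa using (Nat.add_one_mul_choose_eq G.minDegree 1).symm
    _ ≤ Fintype.card V * G.minDegree := Nat.mul_le_mul_right _ G.minDegree_lt_card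
    _ ≤ #G.edgeFinset * 2 := by rw [mul_comm _ 2]; exact hsum

theorem ncard_neighborSet_induce_neighborSet (v : V) (w : G.neighborSet v) :
    ((G.induce (G.neighborSet v)).neighborSet w).ncard = (G.commonNeighbors v w).ncard := by
  rw [neighborSet_induce, ← Set.ncard_image_of_injective _ Subtype.val_injective,
    Subtype.image_preimage_coe, commonNeighbors_eq]

theorem ncard_edgeSet_induce_neighborSet_le [Finite V] (v : V) :
    (G.induce (G.neighborSet v)).edgeSet.ncard ≤
      {t : Finset V | G.IsNClique 3 t ∧ v ∈ t}.ncard := by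
  classical
  let triangle (e : Sym2 (G.neighborSet v)) : Finset V := insert v (e.map (↑)).toFinset
  have hv (e : Sym2 (G.neighborSet v)) : v ∉ (e.map (↑)).toFinset := by
    simp only [Sym2.mem_toFinset, Sym2.mem_map, not_exists, not_and]
    exact fun w _ hwv => G.ne_of_adj w.2 hwv.symm
  refine Set.ncard_le_ncard_of_injOn triangle ?_ ?_ (Set.toFinite _)
  · rintro e he
    induction e using Sym2.ind with
    | _ a b =>
      simp only [triangle, Sym2.map_mk, Sym2.toFinset_mk_eq, Set.mem_ofPred_eq,
        mem_insert_self, and_true, is3Clique_triple_iff]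
      exact ⟨a.2, b.2, he⟩
  · intro e _ e' _ h
    have := congrArg (·.erase v) h
    simp only [triangle, erase_insert (hv _)] at this
    exact Sym2.map.injective Subtype.val_injective (Sym2.toFinset_injective this)

variable {G} in
theorem IsTruss.le_ncard_commonNeighbors {k : ℕ} (h : G.IsTruss k) {u v : V} (huv : G.Adj u v) :
    k ≤ (G.commonNeighbors u v).ncard :=
  h.2 huv

end SimpleGraph

open SimpleGraph in
theorem truss_min_triangles_through_vertex {V : Type*} [Fintype V]
    (G : SimpleGraph V) (k : ℕ) (h : G.IsTruss k) (v : V) :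
    (k + 1).choose 2 ≤ {t : Finset V | G.IsNClique 3 t ∧ v ∈ t}.ncard := by
  classical
  set L := G.induce (G.neighborSet v)
  obtain ⟨u, hu⟩ := h.1 v
  have : Nonempty (G.neighborSet v) := ⟨⟨u, hu⟩⟩
  have hk : k ≤ L.minDegree := by
    refine le_minDegree_of_forall_le_degree _ _ fun w => ?_
    rw [← card_neighborSet_eq_degree, Set.fintypeCard_eq_ncard,
      ncard_neighborSet_induce_neighborSet]
    exact h.le_ncard_commonNeighbors w.2
  calc (k + 1).choose 2 ≤ (L.minDegree + 1).choose 2 := Nat.choose_le_choose 2 (by omega)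
    _ ≤ #L.edgeFinset := L.choose_two_le_card_edgeFinset
    _ = L.edgeSet.ncard := by rw [← coe_edgeFinset, Set.ncard_coe_finset]
    _ ≤ _ := G.ncard_edgeSet_induce_neighborSet_le v
end

section
/- In a k-truss G, if a vertex v has degree exactly k+1, then the induced subgraph on N(v) ∪ {v} is a complete graph on k+2 vertices. -/
theorem truss_min_degree_clique {V : Type*} [Fintype V] [DecidableEq V]
    (G : SimpleGraph V) [DecidableRel G.Adj] (k : ℕ) (h : G.IsTruss k)
    (v : V) (hd : G.degree v = k + 1) :
    (insert v (G.neighborFinset v)).card = k + 2 ∧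
    ∀ u ∈ insert v (G.neighborFinset v), ∀ w ∈ insert v (G.neighborFinset v),
      u ≠ w → G.Adj u w := by
  have hv : v ∉ G.neighborFinset v := by simp
  constructor
  · rw [Finset.card_insert_of_notMem hv, ← G.card_neighborFinset_eq_degree] at *
    omega
  · -- key: any two distinct neighbors of v are adjacent
    have key : ∀ u ∈ G.neighborFinset v, ∀ w ∈ G.neighborFinset v, u ≠ w → G.Adj u w := by
      intro u hu w hw huw
      rw [SimpleGraph.mem_neighborFinset] at hu hw
      set S : Set V := {x : V | G.Adj v x ∧ G.Adj u x} with hS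
      have hsub : S ⊆ ↑((G.neighborFinset v).erase u) := by
        intro x hx
        obtain ⟨h1, h2⟩ := hx
        simp only [Finset.coe_erase, Set.mem_diff, Finset.mem_coe,
          SimpleGraph.mem_neighborFinset, Set.mem_singleton_iff]
        exact ⟨h1, fun he => G.irrefl (he ▸ h2)⟩
      have hcard : ((G.neighborFinset v).erase u).card = k := by
        rw [Finset.card_erase_of_mem (by simpa using hu),
          G.card_neighborFinset_eq_degree, hd]; omega
      have hk : k ≤ S.ncard := h.2 hu
      have hTcard : (↑((G.neighborFinset v).erase u) : Set V).ncard = k := by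
        rw [Set.ncard_coe_finset, hcard]
      have heq : S = ↑((G.neighborFinset v).erase u) :=
        Set.eq_of_subset_of_ncard_le hsub (by omega) (Set.toFinite _)
      have hwin : w ∈ (↑((G.neighborFinset v).erase u) : Set V) := by
        simp [huw.symm, hw]
      rw [← heq] at hwin
      exact hwin.2
    intro u hu w hw huw
    rcases Finset.mem_insert.mp hu with rfl | hu'
    · rcases Finset.mem_insert.mp hw with rfl | hw'
      · exact absurd rfl huw
      · exact (SimpleGraph.mem_neighborFinset _ _ _).mp hw'
    · rcases Finset.mem_insert.mp hw with rfl | hw'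
      · exact ((SimpleGraph.mem_neighborFinset _ _ _).mp hu').symm
      · exact key u hu' w hw' huw
end

section
/- If a graph G has m edges and contains a subgraph (with no isolated vertices) in which every edge lies in at least k triangles, then binomial(k+2, 2) ≤ m; consequently k ≤ sqrt(2m + 1/4) − 3/2 ≤ sqrt(2m). -/
open Finset

theorem trussness_le_sqrt {V : Type*} [Fintype V] (G H : SimpleGraph V)
    (k m : ℕ) (hm : m = G.edgeSet.ncard) (hle : H ≤ G)
    (hne : H.edgeSet.Nonempty)
    (htruss : ∀ ⦃u v : V⦄, H.Adj u v → k ≤ {w : V | H.Adj u w ∧ H.Adj v w}.ncard) :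
    (k + 2).choose 2 ≤ m ∧
    (k : ℝ) ≤ Real.sqrt (2 * m + 1 / 4) - 3 / 2 ∧
    Real.sqrt (2 * m + 1 / 4) - 3 / 2 ≤ Real.sqrt (2 * m) := by
  classical
  -- common-neighbor finset
  set N : V → V → Finset V := fun a b => univ.filter (fun w => H.Adj a w ∧ H.Adj b w) with hN
  have hNcard : ∀ ⦃a b : V⦄, H.Adj a b → k ≤ (N a b).card := by
    intro a b hab
    have := htruss hab
    have : {w : V | H.Adj a w ∧ H.Adj b w}.ncard = (N a b).card := by
      rw [Set.ncard_eq_toFinset_card']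
      congr 1
      ext w
      simp [hN]
    omega
  -- degree bound
  have hdeg : ∀ ⦃a b : V⦄, H.Adj a b → k + 1 ≤ H.degree a := by
    intro a b hab
    have hsub : insert b (N a b) ⊆ H.neighborFinset a := by
      intro w hw
      rcases Finset.mem_insert.mp hw with h | h
      · subst h; simpa using hab
      · simp only [hN, Finset.mem_filter] at h
        simpa using h.2.1
    have hbN : b ∉ N a b := by
      simp [hN, H.irrefl]
    calc k + 1 ≤ (N a b).card + 1 := by have := hNcard hab; omega
    _ = (insert b (N a b)).card := (Finset.card_insert_of_notMem hbN).symm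
    _ ≤ (H.neighborFinset a).card := Finset.card_le_card hsub
    _ = H.degree a := rfl
  -- support
  obtain ⟨e, he⟩ := hne
  induction e using Sym2.ind with
  | _ u v =>
  rw [SimpleGraph.mem_edgeSet] at he
  set S : Finset V := univ.filter (fun a => ∃ b, H.Adj a b) with hS
  have hSsub : insert u (insert v (N u v)) ⊆ S := by
    intro w hw
    simp only [hS, Finset.mem_filter, Finset.mem_univ, true_and]
    rcases Finset.mem_insert.mp hw with h | h
    · exact ⟨v, h ▸ he⟩
    rcases Finset.mem_insert.mp h with h | h
    · exact ⟨u, h ▸ he.symm⟩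
    · simp only [hN, Finset.mem_filter] at h
      exact ⟨u, h.2.1.symm⟩
  have hScard : k + 2 ≤ S.card := by
    have huv : u ∉ insert v (N u v) := by
      simp only [Finset.mem_insert, hN, Finset.mem_filter]
      push_neg
      exact ⟨he.ne, fun _ h _ => absurd h (H.irrefl)⟩
    have hvN : v ∉ N u v := by simp [hN, H.irrefl]
    calc k + 2 ≤ (N u v).card + 2 := by have := hNcard he; omega
    _ = (insert u (insert v (N u v))).card := by
        rw [Finset.card_insert_of_notMem huv, Finset.card_insert_of_notMem hvN]
    _ ≤ S.card := Finset.card_le_card hSsub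
  -- degree sum
  have hsum : (k + 2) * (k + 1) ≤ 2 * H.edgeFinset.card := by
    calc (k + 2) * (k + 1) ≤ S.card * (k + 1) :=
          Nat.mul_le_mul_right _ hScard
    _ ≤ ∑ a ∈ S, H.degree a := by
        have h := Finset.card_nsmul_le_sum S (fun a => H.degree a) (k+1) ?_
        · simpa [smul_eq_mul] using h
        · intro a ha
          simp only [hS, Finset.mem_filter, Finset.mem_univ, true_and] at ha
          obtain ⟨b, hab⟩ := ha
          exact hdeg hab
    _ ≤ ∑ a : V, H.degree a := Finset.sum_le_sum_of_subset (Finset.subset_univ S)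
    _ = 2 * H.edgeFinset.card := by
        rw [SimpleGraph.sum_degrees_eq_twice_card_edges]
  have hHG : H.edgeFinset.card ≤ m := by
    rw [hm, Set.ncard_eq_toFinset_card']
    apply Finset.card_le_card
    intro e he'
    simp only [SimpleGraph.mem_edgeFinset] at he'
    simp only [Set.mem_toFinset]
    exact SimpleGraph.edgeSet_mono hle he'
  have hkm : (k + 2) * (k + 1) ≤ 2 * m := by omega
  have hchoose : (k + 2).choose 2 ≤ m := by
    have h1 : (k + 2).choose 2 = (k + 2) * (k + 1) / 2 := by
      rw [Nat.choose_two_right]; rfl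
    have h2 : 2 ∣ (k + 2) * (k + 1) := by
      rw [mul_comm]; exact (Nat.even_mul_succ_self (k+1)).two_dvd
    omega
  refine ⟨hchoose, ?_, ?_⟩
  · have h2m : ((k + 2) * (k + 1) : ℝ) ≤ 2 * m := by exact_mod_cast hkm
    have hle' : ((k : ℝ) + 3 / 2) ≤ Real.sqrt (2 * m + 1 / 4) := by
      rw [show ((k:ℝ) + 3/2) = Real.sqrt ((k + 3/2)^2) from
        (Real.sqrt_sq (by positivity)).symm]
      apply Real.sqrt_le_sqrt
      nlinarith
    linarith
  · set s := Real.sqrt (2 * (m:ℝ)) with hs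
    have hs0 : 0 ≤ s := Real.sqrt_nonneg _
    have hs2 : s ^ 2 = 2 * m := Real.sq_sqrt (by positivity)
    have : Real.sqrt (2 * m + 1 / 4) ≤ s + 3 / 2 := by
      rw [show s + 3/2 = Real.sqrt ((s + 3/2)^2) from (Real.sqrt_sq (by positivity)).symm]
      apply Real.sqrt_le_sqrt
      nlinarith
    linarith
end

section
/- A connected k-truss on n vertices has at least (n−1)(1 + k/2) edges. -/
/-!
Rank the vertices by a bijection `σ : V ≃ Fin n` and discard every edge `uv` that has a common
neighbour `w` of `u` and `v` ranked below both. The remaining edges still connect `G`: a discarded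
edge is replaced by the path `u w v`, whose edges have a smaller lower endpoint. So at least
`n - 1` edges survive every ranking. On the other hand, with `T_e` the endpoints of `e` together
with their common neighbours, `e` survives only when the `σ`-least vertex of `T_e` is an endpoint,
which happens for at most a fraction `2 / |T_e| ≤ 2 / (k + 2)` of all rankings. Averaging over
rankings gives `n - 1 ≤ 2m / (k + 2)`.
-/

open Finset

section Rankings

variable {V α : Type*} [Fintype V] [DecidableEq V] [Fintype α] [LinearOrder α]

variable (α) in
def minRankings (T : Finset V) (x : V) : Finset (V ≃ α) := {σ | ∀ t ∈ T, σ x ≤ σ t}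

theorem card_minRankings_eq {T : Finset V} {x y : V} (hx : x ∈ T) (hy : y ∈ T) :
    #(minRankings α T x) = #(minRankings α T y) := by
  have hmaps : ∀ {a b}, a ∈ T → b ∈ T →
      Set.MapsTo (fun σ : V ≃ α => (Equiv.swap a b).trans σ)
        (minRankings α T a) (minRankings α T b) := by
    intro a b ha hb σ hσ
    simp only [minRankings, coe_filter, mem_univ, true_and, Set.mem_ofPred_eq,
      Equiv.trans_apply, Equiv.swap_apply_right] at hσ ⊢
    intro t ht
    apply hσ
    rw [Equiv.swap_apply_def]
    split_ifs <;> assumption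
  refine card_nbij' _ (fun σ => (Equiv.swap x y).trans σ) (hmaps hx hy) ?_
    (fun σ _ => ?_) (fun σ _ => ?_)
  · rw [Equiv.swap_comm]; exact hmaps hy hx
  all_goals ext; simp

theorem pairwiseDisjoint_minRankings (T : Finset V) :
    (T : Set V).PairwiseDisjoint (minRankings α T) := by
  intro x hx y hy hxy
  refine disjoint_left.2 fun σ hσx hσy => hxy (σ.injective ?_)
  simp only [minRankings, mem_filter, mem_univ, true_and] at hσx hσy
  exact le_antisymm (hσx y hy) (hσy x hx)

theorem card_mul_card_minRankings_le {T : Finset V} {x : V} (hx : x ∈ T) :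
    #T * #(minRankings α T x) ≤ Fintype.card (V ≃ α) := by
  calc #T * #(minRankings α T x)
      = ∑ y ∈ T, #(minRankings α T y) := by
        rw [sum_congr rfl fun y hy => card_minRankings_eq hy hx, sum_const, smul_eq_mul]
    _ = #(T.biUnion (minRankings α T)) := (card_biUnion (pairwiseDisjoint_minRankings T)).symm
    _ ≤ Fintype.card (V ≃ α) := card_le_univ _

end Rankings

namespace SimpleGraph

variable {V α : Type*} (G : SimpleGraph V)

def HasLowerCommonNeighbor [LT α] (σ : V → α) (e : Sym2 V) : Prop :=
  ∃ w, ∀ x ∈ e, G.Adj x w ∧ σ w < σ x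

def triangleSpan (e : Sym2 V) : Set V := {w | w ∈ e ∨ ∀ x ∈ e, G.Adj x w}

variable {G}

theorem Adj.reachable_deleteEdges_hasLowerCommonNeighbor [LinearOrder α] [WellFoundedLT α]
    {u v : V} (huv : G.Adj u v) (σ : V → α) :
    (G.deleteEdges {e | G.HasLowerCommonNeighbor σ e}).Reachable u v := by
  induction hm : min (σ u) (σ v) using WellFoundedLT.induction generalizing u v with
  | _ m ih =>
    by_cases hlow : G.HasLowerCommonNeighbor σ s(u, v)
    · obtain ⟨w, hw⟩ := hlow
      obtain ⟨huw, hwu⟩ := hw u (Sym2.mem_mk_left u v)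
      obtain ⟨hvw, hwv⟩ := hw v (Sym2.mem_mk_right u v)
      have hwm : σ w < m := hm ▸ lt_min hwu hwv
      exact (ih _ hwm huw (min_eq_right hwu.le)).trans
        (ih _ hwm hvw.symm (min_eq_left hwv.le))
    · exact (deleteEdges_adj.2 ⟨huv, hlow⟩).reachable

theorem Connected.deleteEdges_hasLowerCommonNeighbor [LinearOrder α] [WellFoundedLT α]
    (hG : G.Connected) (σ : V → α) :
    (G.deleteEdges {e | G.HasLowerCommonNeighbor σ e}).Connected := by
  refine @Connected.mk _ _ (fun u v => ?_) hG.nonempty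
  obtain ⟨p⟩ := hG.preconnected u v
  induction p with
  | nil => rfl
  | cons h _ ih => exact (h.reachable_deleteEdges_hasLowerCommonNeighbor σ).trans ih

theorem ncard_triangleSpan_mk [Finite V] {u v : V} (huv : G.Adj u v) :
    (G.triangleSpan s(u, v)).ncard = {w | G.Adj u w ∧ G.Adj v w}.ncard + 2 := by
  have hspan : G.triangleSpan s(u, v) = insert u (insert v {w | G.Adj u w ∧ G.Adj v w}) := by
    ext w
    simp [triangleSpan, or_assoc]
  rw [hspan, Set.ncard_insert_of_notMem, Set.ncard_insert_of_notMem]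
  · simp
  · simp [huv.ne]

theorem IsTruss.add_two_le_ncard_triangleSpan [Finite V] {k : ℕ} (h : G.IsTruss k) {e : Sym2 V}
    (he : e ∈ G.edgeSet) : k + 2 ≤ (G.triangleSpan e).ncard := by
  induction e with
  | _ u v => rw [ncard_triangleSpan_mk he]; exact Nat.add_le_add_right (h.2 he) 2

theorem mem_minRankings_of_not_hasLowerCommonNeighbor [Fintype V] [DecidableEq V] [Fintype α]
    [LinearOrder α] {σ : V ≃ α} {e : Sym2 V} {u : V} (hmin : ∀ x ∈ e, σ u ≤ σ x)
    (hσ : ¬ G.HasLowerCommonNeighbor σ e) {T : Finset V} (hT : ↑T ⊆ G.triangleSpan e) :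
    σ ∈ minRankings α T u := by
  simp only [minRankings, mem_filter, mem_univ, true_and]
  intro t ht
  rcases hT ht with ht | ht
  · exact hmin t ht
  · by_contra! hlt
    exact hσ ⟨t, fun x hx => ⟨ht x hx, hlt.trans_le (hmin x hx)⟩⟩

open scoped Classical in
theorem ncard_triangleSpan_mul_card_filter_not_hasLowerCommonNeighbor_le [Fintype V]
    [Fintype α] [LinearOrder α] {e : Sym2 V} (he : e ∈ G.edgeSet) :
    (G.triangleSpan e).ncard * #{σ : V ≃ α | ¬ G.HasLowerCommonNeighbor σ e} ≤
      2 * Fintype.card (V ≃ α) := by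
  induction e with
  | _ u v =>
    set T := (G.triangleSpan s(u, v)).toFinset
    have hu : u ∈ T := Set.mem_toFinset.2 (Or.inl (Sym2.mem_mk_left u v))
    have hv : v ∈ T := Set.mem_toFinset.2 (Or.inl (Sym2.mem_mk_right u v))
    have hgood : ({σ : V ≃ α | ¬ G.HasLowerCommonNeighbor σ s(u, v)} : Finset (V ≃ α)) ⊆
        minRankings α T u ∪ minRankings α T v := by
      intro σ hσ
      rw [mem_filter] at hσ
      rcases le_total (σ u) (σ v) with h | h
      · exact mem_union_left _ <| mem_minRankings_of_not_hasLowerCommonNeighbor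
          (by simp [h]) hσ.2 (by simp [T])
      · exact mem_union_right _ <| mem_minRankings_of_not_hasLowerCommonNeighbor
          (by simp [h]) hσ.2 (by simp [T])
    calc (G.triangleSpan s(u, v)).ncard * #{σ : V ≃ α | ¬ G.HasLowerCommonNeighbor σ s(u, v)}
        ≤ #T * (2 * #(minRankings α T u)) := by
          rw [Set.ncard_eq_toFinset_card']
          refine Nat.mul_le_mul_left _
            (((card_le_card hgood).trans (card_union_le _ _)).trans ?_)
          rw [card_minRankings_eq hv hu, two_mul]
      _ ≤ 2 * Fintype.card (V ≃ α) := by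
          rw [mul_left_comm]
          exact Nat.mul_le_mul_left _ (card_mul_card_minRankings_le hu)

open scoped Classical in
theorem Connected.card_le_card_filter_not_hasLowerCommonNeighbor_add_one [Fintype V]
    [LinearOrder α] [WellFoundedLT α] (hG : G.Connected) (σ : V → α) :
    Fintype.card V ≤ #{e ∈ G.edgeFinset | ¬ G.HasLowerCommonNeighbor σ e} + 1 := by
  have hcard : Nat.card (G.deleteEdges {e | G.HasLowerCommonNeighbor σ e}).edgeSet =
      #{e ∈ G.edgeFinset | ¬ G.HasLowerCommonNeighbor σ e} := by
    rw [Nat.card_eq_card_toFinset]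
    congr 1
    ext e
    simp
  have := (hG.deleteEdges_hasLowerCommonNeighbor σ).card_vert_le_card_edgeSet_add_one
  rwa [hcard, Nat.card_eq_fintype_card] at this

open scoped Classical in
theorem Connected.card_sub_one_le_sum_two_div_ncard_triangleSpan [Fintype V]
    (hG : G.Connected) :
    (Fintype.card V : ℚ) - 1 ≤
      ∑ e ∈ G.edgeFinset, 2 / ((G.triangleSpan e).ncard : ℚ) := by
  set n := Fintype.card V
  set N := Fintype.card (V ≃ Fin n)
  have hN : (0 : ℚ) < N := by exact_mod_cast Fintype.card_pos_iff.2 ⟨Fintype.equivFin V⟩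
  let r (σ : V ≃ Fin n) (e : Sym2 V) : Prop := ¬ G.HasLowerCommonNeighbor σ e
  have hσ (σ : V ≃ Fin n) : (n : ℚ) - 1 ≤ #(G.edgeFinset.bipartiteAbove r σ) := by
    have : (n : ℚ) ≤ #(G.edgeFinset.bipartiteAbove r σ) + 1 := by
      exact_mod_cast hG.card_le_card_filter_not_hasLowerCommonNeighbor_add_one σ
    linarith
  have he : ∀ e ∈ G.edgeFinset,
      (#(univ.bipartiteBelow r e) : ℚ) ≤ N * (2 / (G.triangleSpan e).ncard) := by
    intro e he
    have hpos : (0 : ℚ) < (G.triangleSpan e).ncard := by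
      exact_mod_cast (Set.ncard_pos (Set.toFinite (G.triangleSpan e))).2
        ⟨_, Or.inl e.out_fst_mem⟩
    rw [mul_div_assoc', le_div_iff₀ hpos, mul_comm, mul_comm (N : ℚ)]
    exact_mod_cast ncard_triangleSpan_mul_card_filter_not_hasLowerCommonNeighbor_le
      (mem_edgeFinset.1 he)
  refine le_of_mul_le_mul_left ?_ hN
  calc (N : ℚ) * (n - 1)
        ≤ ∑ σ : V ≃ Fin n, (#(G.edgeFinset.bipartiteAbove r σ) : ℚ) := by
        simpa [N] using card_nsmul_le_sum univ _ _ fun σ _ => hσ σ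
    _ = ∑ e ∈ G.edgeFinset, (#(univ.bipartiteBelow r e) : ℚ) := by
        exact_mod_cast sum_card_bipartiteAbove_eq_sum_card_bipartiteBelow r
    _ ≤ _ := by rw [mul_sum]; exact sum_le_sum he

end SimpleGraph

theorem connected_truss_min_edges {V : Type*} [Fintype V] (G : SimpleGraph V)
    (k : ℕ) (hc : G.Connected) (h : G.IsTruss k) :
    ((Fintype.card V : ℚ) - 1) * (1 + (k : ℚ) / 2) ≤ (G.edgeSet.ncard : ℚ) := by
  classical
  have hspan : ∀ e ∈ G.edgeFinset, 2 / ((G.triangleSpan e).ncard : ℚ) ≤ 2 / (k + 2) := by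
    intro e he
    gcongr
    exact_mod_cast h.add_two_le_ncard_triangleSpan (SimpleGraph.mem_edgeFinset.1 he)
  have hbound : (Fintype.card V : ℚ) - 1 ≤ G.edgeSet.ncard * (2 / (k + 2)) := by
    calc (Fintype.card V : ℚ) - 1
        ≤ ∑ e ∈ G.edgeFinset, 2 / ((G.triangleSpan e).ncard : ℚ) :=
          hc.card_sub_one_le_sum_two_div_ncard_triangleSpan
      _ ≤ ∑ _e ∈ G.edgeFinset, 2 / ((k : ℚ) + 2) := sum_le_sum hspan
      _ = G.edgeSet.ncard * (2 / (k + 2)) := by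
          rw [sum_const, nsmul_eq_mul, ← SimpleGraph.coe_edgeFinset, Set.ncard_coe_finset]
  rw [mul_div_assoc', le_div_iff₀ (by positivity)] at hbound
  linarith
end

section
/- For every k ≥ 1 and n ≡ 1 (mod k+1) with n ≥ k+2, there exists a connected k-truss on n vertices with exactly (n−1)(k+2)/2 edges; it can be obtained by chaining (n−1)/(k+1) copies of K_{k+2}, consecutively identified at single vertices. -/
open Finset

namespace SimpleGraph

variable {ι V : Type*}

def cliqueUnion (s : ι → Finset V) : SimpleGraph V where
  Adj u v := u ≠ v ∧ ∃ i, u ∈ s i ∧ v ∈ s i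

@[simp]
lemma cliqueUnion_adj {s : ι → Finset V} {u v : V} :
    (cliqueUnion s).Adj u v ↔ u ≠ v ∧ ∃ i, u ∈ s i ∧ v ∈ s i :=
  Iff.rfl

lemma isClique_cliqueUnion (s : ι → Finset V) (i : ι) :
    (cliqueUnion s).IsClique (s i : Set V) :=
  fun _ hu _ hv huv => ⟨huv, i, hu, hv⟩

lemma IsClique.card_sub_two_le_ncard_commonNeighbors [Finite V] [DecidableEq V]
    {G : SimpleGraph V} {s : Finset V} (hs : G.IsClique (s : Set V)) {u v : V}
    (hu : u ∈ s) (hv : v ∈ s) (huv : u ≠ v) :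
    #s - 2 ≤ (G.commonNeighbors u v).ncard := by
  have hsub : ((s \ {u, v} : Finset V) : Set V) ⊆ G.commonNeighbors u v := by
    intro w hw
    simp only [coe_sdiff, coe_pair, Set.mem_sdiff, Set.mem_insert_iff,
      Set.mem_singleton_iff, not_or] at hw
    obtain ⟨hws, hwu, hwv⟩ := hw
    exact ⟨hs hu hws (Ne.symm hwu), hs hv hws (Ne.symm hwv)⟩
  calc #s - 2 = #(s \ {u, v}) := by
        rw [card_sdiff_of_subset (insert_subset hu (singleton_subset_iff.2 hv)), card_pair huv]
    _ = ((s \ {u, v} : Finset V) : Set V).ncard := (Set.ncard_coe_finset _).symm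
    _ ≤ (G.commonNeighbors u v).ncard := Set.ncard_le_ncard hsub

lemma le_ncard_commonNeighbors_cliqueUnion [Finite V] {s : ι → Finset V} {k : ℕ}
    (hs : ∀ i, k + 2 ≤ #(s i)) {u v : V} (huv : (cliqueUnion s).Adj u v) :
    k ≤ ((cliqueUnion s).commonNeighbors u v).ncard := by
  classical
  obtain ⟨hne, i, hu, hv⟩ := huv
  exact (Nat.le_sub_of_add_le (hs i)).trans
    ((isClique_cliqueUnion s i).card_sub_two_le_ncard_commonNeighbors hu hv hne)

lemma two_mul_ncard_edgeSet_cliqueUnion [Fintype ι] [Fintype V] [DecidableEq V]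
    (s : ι → Finset V) (hs : Pairwise fun i j => #(s i ∩ s j) ≤ 1) :
    2 * (cliqueUnion s).edgeSet.ncard = ∑ i, #(s i) * (#(s i) - 1) := by
  classical
  have hpairs : ({p : V × V | (cliqueUnion s).Adj p.1 p.2} : Finset (V × V)) =
      univ.biUnion fun i => (s i).offDiag := by
    ext ⟨u, v⟩
    simp only [mem_filter, mem_univ, true_and, cliqueUnion_adj, mem_biUnion, mem_offDiag]
    grind
  have hdisj : (↑(univ : Finset ι) : Set ι).PairwiseDisjoint fun i => (s i).offDiag := by
    intro i _ j _ hij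
    simp only [Function.onFun, Finset.disjoint_left, mem_offDiag]
    intro p hpi hpj
    exact hpi.2.2 (card_le_one.1 (hs hij) _ (mem_inter.2 ⟨hpi.1, hpj.1⟩)
      _ (mem_inter.2 ⟨hpi.2.1, hpj.2.1⟩))
  rw [← coe_edgeFinset, Set.ncard_coe_finset, two_mul_card_edgeFinset, hpairs,
    card_biUnion hdisj]
  simp only [offDiag_card, Nat.mul_sub_one]

end SimpleGraph

open SimpleGraph

def chainBlock (m d : ℕ) (t : Fin m) : Finset (Fin (m * d + 1)) :=
  Icc ⟨d * t, by nlinarith [t.isLt]⟩ ⟨d * t + d, by nlinarith [t.isLt]⟩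

variable {m d : ℕ}

lemma mem_chainBlock {t : Fin m} {v : Fin (m * d + 1)} :
    v ∈ chainBlock m d t ↔ d * t ≤ v ∧ (v : ℕ) ≤ d * t + d := by
  simp [chainBlock, Fin.le_def]

lemma card_chainBlock (t : Fin m) : #(chainBlock m d t) = d + 1 := by
  simp only [chainBlock, Fin.card_Icc]
  omega

lemma card_chainBlock_inter_le_one {s t : Fin m} (hst : s ≠ t) :
    #(chainBlock m d s ∩ chainBlock m d t) ≤ 1 := by
  refine card_le_one.2 fun u hu v hv => Fin.ext ?_
  simp only [mem_inter, mem_chainBlock] at hu hv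
  rcases Fin.lt_or_lt_of_ne hst with h | h <;>
  · have := Nat.mul_le_mul_left d (Nat.succ_le_of_lt h)
    rw [Nat.mul_succ] at this
    omega

def cliqueChain (m d : ℕ) : SimpleGraph (Fin (m * d + 1)) :=
  cliqueUnion (chainBlock m d)

lemma cliqueChain_adj_of_succ (hd : 0 < d) {u v : Fin (m * d + 1)} (h : (u : ℕ) + 1 = v) :
    (cliqueChain m d).Adj u v := by
  have hu : (u : ℕ) < d * m := by have := Nat.mul_comm m d; omega
  have hdiv := Nat.div_add_mod (u : ℕ) d
  have hrem := Nat.mod_lt (u : ℕ) hd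
  refine ⟨Fin.ne_of_val_ne (by omega), ⟨u / d, Nat.div_lt_of_lt_mul hu⟩, ?_, ?_⟩ <;>
    rw [mem_chainBlock] <;> dsimp only <;> omega

lemma pathGraph_le_cliqueChain (hd : 0 < d) : pathGraph (m * d + 1) ≤ cliqueChain m d := by
  intro u v huv
  rcases pathGraph_adj.1 huv with h | h
  · exact cliqueChain_adj_of_succ hd h
  · exact (cliqueChain_adj_of_succ hd h).symm

lemma cliqueChain_connected (hd : 0 < d) : (cliqueChain m d).Connected :=
  (pathGraph_connected _).mono (pathGraph_le_cliqueChain hd)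

theorem exists_connected_truss_min_edges_general (k n : ℕ)
    (hn : k + 2 ≤ n) (hmod : n % (k + 1) = 1) :
    ∃ G : SimpleGraph (Fin n), G.Connected ∧ G.IsTruss k ∧
      2 * G.edgeSet.ncard = (n - 1) * (k + 2) := by
  obtain ⟨m, rfl⟩ : ∃ m, n = m * (k + 1) + 1 :=
    ⟨n / (k + 1), (hmod ▸ Nat.div_add_mod' n (k + 1)).symm⟩
  have : Nontrivial (Fin (m * (k + 1) + 1)) := Fin.nontrivial_iff_two_le.2 (by omega)
  have hconn := cliqueChain_connected (m := m) k.succ_pos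
  refine ⟨cliqueChain m (k + 1), hconn,
    ⟨hconn.preconnected.exists_adj_of_nontrivial, fun u v huv => ?_⟩, ?_⟩
  · exact le_ncard_commonNeighbors_cliqueUnion (fun t => (card_chainBlock t).ge) huv
  · rw [cliqueChain, two_mul_ncard_edgeSet_cliqueUnion _ fun _ _ => card_chainBlock_inter_le_one]
    simp only [card_chainBlock, sum_const, card_univ, Fintype.card_fin, smul_eq_mul,
      Nat.add_sub_cancel]
    ring

theorem exists_connected_truss_min_edges (k n : ℕ) (hk : 1 ≤ k)
    (hn : k + 2 ≤ n) (hmod : n % (k + 1) = 1) :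
    ∃ G : SimpleGraph (Fin n), G.Connected ∧ G.IsTruss k ∧
      2 * G.edgeSet.ncard = (n - 1) * (k + 2) :=
  exists_connected_truss_min_edges_general k n hn hmod
end

section
/- For any graph G with m edges, the average degeneracy satisfies Σ_{(u,v)∈E} min(d(u),d(v)) ≤ 2m·α*(G), where α*(G) is the pseudo-arboricity; equivalently, if G admits an orientation in which every vertex has out-degree at most p, then Σ_{(u,v)∈E} min(d(u),d(v)) ≤ 2mp. -/
/-!
Charge each edge `uv`, oriented `u → v`, to its tail: `min (d u) (d v) ≤ d u`. A vertex is then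
charged `d u` once per out-arc, hence at most `p * d u` in total, and `∑ d u = 2 m`.
-/

open Finset

theorem SimpleGraph.sum_edgeFinset_le_sum_filter_rel {V M : Type*} [Fintype V]
    [AddCommMonoid M] [Preorder M] [AddLeftMono M] (G : SimpleGraph V) [DecidableRel G.Adj]
    (r : V → V → Prop) [DecidableRel r] (f : Sym2 V → M) (hf : ∀ e, 0 ≤ f e)
    (hcover : ∀ u v, G.Adj u v → r u v ∨ r v u) :
    ∑ e ∈ G.edgeFinset, f e ≤ ∑ q ∈ univ.filter (fun q : V × V => r q.1 q.2), f s(q.1, q.2) := by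
  classical
  set arcs := univ.filter (fun q : V × V => r q.1 q.2)
  have hsub : G.edgeFinset ⊆ arcs.image (fun q => s(q.1, q.2)) := by
    intro e he
    induction e with
    | _ u v =>
      rcases hcover u v (by simpa using he) with huv | hvu
      · exact mem_image.mpr ⟨(u, v), by simpa [arcs] using huv, rfl⟩
      · exact mem_image.mpr ⟨(v, u), by simpa [arcs] using hvu, Sym2.eq_swap⟩
  calc ∑ e ∈ G.edgeFinset, f e
      ≤ ∑ e ∈ arcs.image (fun q => s(q.1, q.2)), f e :=
        sum_le_sum_of_subset_of_nonneg hsub fun e _ _ => hf e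
    _ ≤ ∑ q ∈ arcs, f s(q.1, q.2) := sum_image_le_of_nonneg fun e _ => hf e

theorem Finset.sum_filter_rel_fst_eq_sum_card_smul {V M : Type*} [Fintype V] [AddCommMonoid M]
    (r : V → V → Prop) [DecidableRel r] (w : V → M) :
    ∑ q ∈ univ.filter (fun q : V × V => r q.1 q.2), w q.1 =
      ∑ u, (univ.filter (fun v => r u v)).card • w u := by
  rw [sum_filter, ← univ_product_univ, sum_product]
  refine sum_congr rfl fun u _ => ?_
  exact (sum_filter (fun v => r u v) fun _ => w u).symm.trans (sum_const _)

theorem sum_min_degree_le_two_m_p_general {V : Type*} [Fintype V]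
    (G : SimpleGraph V) [DecidableRel G.Adj] (p : ℕ)
    (r : V → V → Prop) [DecidableRel r]
    (hcover : ∀ u v : V, G.Adj u v → (r u v ↔ ¬ r v u))
    (hout : ∀ u : V, (Finset.univ.filter (fun v => r u v)).card ≤ p) :
    ∑ e ∈ G.edgeFinset,
        Sym2.lift ⟨fun u v => min (G.degree u) (G.degree v),
          fun u v => min_comm _ _⟩ e ≤
      2 * G.edgeFinset.card * p := by
  have horient : ∀ u v, G.Adj u v → r u v ∨ r v u := fun u v h =>
    or_iff_not_imp_right.mpr (hcover u v h).mpr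
  calc _ ≤ ∑ q ∈ univ.filter (fun q : V × V => r q.1 q.2), min (G.degree q.1) (G.degree q.2) :=
        G.sum_edgeFinset_le_sum_filter_rel r _ (fun _ => Nat.zero_le _) horient
    _ ≤ ∑ q ∈ univ.filter (fun q : V × V => r q.1 q.2), G.degree q.1 :=
        sum_le_sum fun q _ => min_le_left _ _
    _ = ∑ u, (univ.filter (fun v => r u v)).card • G.degree u :=
        sum_filter_rel_fst_eq_sum_card_smul r fun v => G.degree v
    _ ≤ ∑ u, p * G.degree u := sum_le_sum fun u _ => Nat.mul_le_mul_right _ (hout u)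
    _ = 2 * G.edgeFinset.card * p := by
      rw [← mul_sum, G.sum_degrees_eq_twice_card_edges, mul_comm]

theorem sum_min_degree_le_two_m_p {V : Type*} [Fintype V] [DecidableEq V]
    (G : SimpleGraph V) [DecidableRel G.Adj] (p : ℕ)
    (r : V → V → Prop) [DecidableRel r]
    (hsub : ∀ u v : V, r u v → G.Adj u v)
    (hcover : ∀ u v : V, G.Adj u v → (r u v ↔ ¬ r v u))
    (hout : ∀ u : V, (Finset.univ.filter (fun v => r u v)).card ≤ p) :
    ∑ e ∈ G.edgeFinset,
        Sym2.lift ⟨fun u v => min (G.degree u) (G.degree v),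
          fun u v => min_comm _ _⟩ e ≤
      2 * G.edgeFinset.card * p :=
  sum_min_degree_le_two_m_p_general G p r hcover hout
end
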